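/- Let n ≥ 1 be an integer and let b ∈ ℝ with b > n − 1/2. Then all n zeros of the hypergeometric polynomial F(−n, b; 1/2; z) are real, simple, and lie in the open interval (0, 1). -/

import Mathlib

open Polynomial
open scoped Classical

/-- The hypergeometric polynomial `F(-n, b; c; z) = ∑_{k=0}^n ((-n)_k (b)_k / ((c)_k k!)) z^k`,
viewed as a polynomial over `ℂ` (with real parameters `b`, `c`). -/
noncomputable def hypPoly (n : ℕ) (b c : ℝ) : Polynomial ℂ :=
  ∑ k ∈ Finset.range (n + 1),
    Polynomial.C ((((((ascPochhammer ℝ k).eval (-(n : ℝ))) * ((ascPochhammer ℝ k).eval b)) /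
      (((ascPochhammer ℝ k).eval c) * (Nat.factorial k : ℝ))) : ℝ) : ℂ) * Polynomial.X ^ k

/-- Number of zeros of `p`, counted with multiplicity, lying in the set `S ⊆ ℂ`. -/
noncomputable def countIn (p : Polynomial ℂ) (S : Set ℂ) : ℕ :=
  Multiset.card (p.roots.filter (fun z => z ∈ S))

open Set Finset

/-!
Write `F(-m, b; c; x)` for the real hypergeometric polynomial. Its contiguous relations give the
Rodrigues-type identity
  `d/dx [x^c (1-x)^(b-c-m) F(-m, b+1; c+1; x)] = c x^(c-1) (1-x)^(b-c-m-1) F(-m-1, b; c; x)`.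
When `c > 0` and `b - c - m > 0` the bracket vanishes at `0` and `1`, so Rolle's theorem between
consecutive zeros in `[0, 1]` produces one more zero of `F(-m-1, b; c)` in `(0, 1)` than
`F(-m, b+1; c+1)` has. By induction `F(-m, b; c)` has `m` distinct zeros in `(0, 1)` as soon as
`c > 0` and `b - c - m > -1` (the Jacobi parameters exceed `-1`); as its degree is at most `m`,
these are all its zeros and each is simple. For `c = 1/2` the condition reads `b > m - 1/2`.
-/

lemma ascPochhammer_succ_eval_left {S : Type*} [CommSemiring S] (n : ℕ) (x : S) :
    (ascPochhammer S (n + 1)).eval x = x * (ascPochhammer S n).eval (x + 1) := by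
  simp [ascPochhammer_succ_left]

theorem card_le_card_add_one_of_hasDerivAt {f f' : ℝ → ℝ} {a b : ℝ} {s t : Finset ℝ}
    (hf : ContinuousOn f (Icc a b)) (hff' : ∀ x ∈ Ioo a b, HasDerivAt f (f' x) x)
    (hs : ∀ x ∈ s, x ∈ Icc a b ∧ f x = 0) (ht : ∀ x ∈ Ioo a b, f' x = 0 → x ∈ t) :
    s.card ≤ t.card + 1 := by
  refine card_le_of_interleaved fun x hx y hy hxy _ => ?_
  obtain ⟨hxab, hfx⟩ := hs x hx
  obtain ⟨hyab, hfy⟩ := hs y hy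
  have hsub : Icc x y ⊆ Icc a b := Icc_subset_Icc hxab.1 hyab.2
  obtain ⟨z, hz, hf'z⟩ := exists_hasDerivAt_eq_zero hxy (hf.mono hsub) (hfx.trans hfy.symm)
    fun z hz => hff' z (Ioo_subset_Ioo hxab.1 hyab.2 hz)
  exact ⟨z, ht z (Ioo_subset_Ioo hxab.1 hyab.2 hz) hf'z, hz⟩

noncomputable def rootsIn {R : Type*} [CommRing R] [IsDomain R] (p : R[X]) (S : Set R) :
    Finset R :=
  p.roots.toFinset.filter (· ∈ S)

lemma mem_rootsIn {R : Type*} [CommRing R] [IsDomain R] {p : R[X]} {S : Set R} {x : R} :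
    x ∈ rootsIn p S ↔ (p ≠ 0 ∧ p.IsRoot x) ∧ x ∈ S := by
  simp [rootsIn, mem_roots']

lemma card_roots_eq_of_le_card_rootsIn {R : Type*} [CommRing R] [IsDomain R] {p : R[X]} {n : ℕ}
    {S : Set R} (hdeg : p.natDegree ≤ n) (hroots : n ≤ (rootsIn p S).card) :
    p.natDegree = n ∧ Multiset.card p.roots = n ∧ p.roots.Nodup ∧
      ∀ x ∈ p.roots, x ∈ S := by
  have hsub : rootsIn p S ⊆ p.roots.toFinset := filter_subset _ _
  have h1 := Finset.card_le_card hsub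
  have h2 := Multiset.toFinset_card_le p.roots
  have h3 := p.card_roots'
  refine ⟨by omega, by omega, Multiset.toFinset_card_eq_card_iff_nodup.1 (by omega),
    fun x hx => ?_⟩
  have heq : rootsIn p S = p.roots.toFinset := eq_of_subset_of_card_le hsub (by omega)
  exact (mem_rootsIn.1 (heq ▸ Multiset.mem_toFinset.2 hx)).2

noncomputable def hypCoeff (a b c : ℝ) (k : ℕ) : ℝ :=
  (ascPochhammer ℝ k).eval a * (ascPochhammer ℝ k).eval b /
    ((ascPochhammer ℝ k).eval c * (k.factorial : ℝ))

@[simp]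
lemma hypCoeff_zero (a b c : ℝ) : hypCoeff a b c 0 = 1 := by simp [hypCoeff]

lemma hypCoeff_neg_natCast_succ (m : ℕ) (b c : ℝ) : hypCoeff (-m) b c (m + 1) = 0 := by
  simp [hypCoeff, ascPochhammer_eval_neg_coe_nat_of_lt (Nat.lt_succ_self m)]

lemma hypCoeff_contiguous {c : ℝ} (hc : 0 < c) (a b : ℝ) (k : ℕ) :
    hypCoeff (a + 1) (b + 1) (c + 1) (k + 1) * (c + 1 + k)
      - hypCoeff (a + 1) (b + 1) (c + 1) k * (a + b + k + 1)
      = c * hypCoeff a b c (k + 1) := by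
  have hpc : 0 < (ascPochhammer ℝ k).eval (c + 1) := ascPochhammer_pos k _ (by linarith)
  simp only [hypCoeff]
  rw [ascPochhammer_succ_eval _ (a + 1), ascPochhammer_succ_eval _ (b + 1),
    ascPochhammer_succ_eval _ (c + 1), ascPochhammer_succ_eval_left _ a,
    ascPochhammer_succ_eval_left _ b, ascPochhammer_succ_eval_left _ c, Nat.factorial_succ]
  push_cast
  field_simp
  ring

noncomputable def realHypPoly (n : ℕ) (b c : ℝ) : ℝ[X] :=
  ∑ k ∈ range (n + 1), C (hypCoeff (-n) b c k) * X ^ k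

lemma eval_realHypPoly (n : ℕ) (b c x : ℝ) :
    (realHypPoly n b c).eval x = ∑ k ∈ range (n + 1), hypCoeff (-n) b c k * x ^ k := by
  simp [realHypPoly, eval_finsetSum]

lemma mul_eval_derivative_realHypPoly (n : ℕ) (b c x : ℝ) :
    x * (realHypPoly n b c).derivative.eval x
      = ∑ k ∈ range (n + 1), hypCoeff (-n) b c k * k * x ^ k := by
  simp only [realHypPoly, derivative_sum, derivative_C_mul_X_pow, eval_finsetSum, eval_mul,
    eval_pow, eval_C, eval_X, Finset.mul_sum]
  refine Finset.sum_congr rfl fun k _ => ?_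
  rcases k.eq_zero_or_pos with rfl | hk
  · simp
  · rw [← mul_pow_sub_one hk.ne' x]
    ring

lemma realHypPoly_ne_zero (n : ℕ) (b c : ℝ) : realHypPoly n b c ≠ 0 := by
  intro h
  simpa [eval_realHypPoly, Finset.sum_range_succ'] using congrArg (eval 0) h

lemma natDegree_realHypPoly_le (n : ℕ) (b c : ℝ) : (realHypPoly n b c).natDegree ≤ n :=
  natDegree_sum_le_of_forall_le _ _ fun k hk =>
    (natDegree_C_mul_X_pow_le _ k).trans (Nat.lt_succ_iff.mp (Finset.mem_range.mp hk))

lemma realHypPoly_contiguous {c : ℝ} (hc : 0 < c) (m : ℕ) (b x : ℝ) :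
    (c * (1 - x) - (b - c - m) * x) * (realHypPoly m (b + 1) (c + 1)).eval x
      + (1 - x) * (x * (realHypPoly m (b + 1) (c + 1)).derivative.eval x)
      = c * (realHypPoly (m + 1) b c).eval x := by
  set A := hypCoeff (-m) (b + 1) (c + 1)
  set B := hypCoeff (-(m + 1 : ℕ)) b c
  set u : ℕ → ℝ := fun k => A k * (c + k) * x ^ k
  set v : ℕ → ℝ := fun k => A k * (b - m + k) * x ^ (k + 1)
  -- The left side is `∑ (u k - v k)`; shifting the `u`-sum (`u 0 = c`, `u (m + 1) = 0`) pairs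
  -- `u (k + 1)` with `v k`, which the contiguous relation of the coefficients evaluates.
  have hstep (k : ℕ) : u (k + 1) - v k = c * (B (k + 1) * x ^ (k + 1)) := by
    have h : A (k + 1) * (c + 1 + k) - A k * (b - m + k) = c * B (k + 1) := by
      have h := hypCoeff_contiguous hc (-(m + 1 : ℕ)) b k
      rwa [show -((m + 1 : ℕ) : ℝ) + 1 = -m by push_cast; ring,
        show -((m + 1 : ℕ) : ℝ) + b + k + 1 = b - m + k by push_cast; ring] at h
    simp only [u, v, ← mul_assoc, ← h]
    push_cast
    ring
  have hu : ∑ k ∈ range (m + 1), u k = c + ∑ k ∈ range (m + 1), u (k + 1) := by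
    have hlast : u (m + 1) = 0 := by simp [u, A, hypCoeff_neg_natCast_succ]
    have h := (sum_range_succ u (m + 1)).symm.trans (sum_range_succ' u (m + 1))
    simp only [hlast, add_zero] at h
    simp [h, u, A, add_comm]
  calc _ = ∑ k ∈ range (m + 1), (u k - v k) := by
        rw [eval_realHypPoly, mul_eval_derivative_realHypPoly, mul_sum, mul_sum,
          ← sum_add_distrib]
        refine sum_congr rfl fun k _ => ?_
        simp only [u, v, A]
        ring
    _ = c + ∑ k ∈ range (m + 1), (u (k + 1) - v k) := by
        rw [sum_sub_distrib, sum_sub_distrib, hu, add_sub_assoc]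
    _ = c * (realHypPoly (m + 1) b c).eval x := by
        rw [eval_realHypPoly, sum_range_succ' _ (m + 1), mul_add, mul_sum,
          sum_congr rfl fun k _ => hstep k]
        simp [B, add_comm]

lemma hasDerivAt_rpow_mul_rpow_mul_realHypPoly {c : ℝ} (hc : 0 < c) (m : ℕ) (b : ℝ) {x : ℝ}
    (hx0 : 0 < x) (hx1 : x < 1) :
    HasDerivAt (fun y => y ^ c * (1 - y) ^ (b - c - m) * (realHypPoly m (b + 1) (c + 1)).eval y)
      (c * x ^ (c - 1) * (1 - x) ^ (b - c - m - 1) * (realHypPoly (m + 1) b c).eval x) x := by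
  have h1x : 0 < 1 - x := by linarith
  have hxc := (hasDerivAt_id x).rpow_const (p := c) (Or.inl hx0.ne')
  have hxβ := ((hasDerivAt_id x).const_sub 1).rpow_const (p := b - c - m) (Or.inl h1x.ne')
  refine ((hxc.mul hxβ).mul ((realHypPoly m (b + 1) (c + 1)).hasDerivAt x)).congr_deriv ?_
  simp only [id, Pi.mul_apply]
  rw [show ∀ u v w : ℝ, c * u * v * w = u * v * (c * w) by intros; ring,
    ← realHypPoly_contiguous hc m b x, Real.rpow_sub_one hx0.ne', Real.rpow_sub_one h1x.ne']
  field_simp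
  ring

lemma card_rootsIn_Ioo_realHypPoly_succ {c : ℝ} (hc : 0 < c) {m : ℕ} {b : ℝ}
    (hβ : 0 < b - c - m) :
    (rootsIn (realHypPoly m (b + 1) (c + 1)) (Ioo 0 1)).card + 1
      ≤ (rootsIn (realHypPoly (m + 1) b c) (Ioo 0 1)).card := by
  set Z := rootsIn (realHypPoly m (b + 1) (c + 1)) (Ioo 0 1)
  have h0 : (0 : ℝ) ∉ Z := fun h => (mem_rootsIn.1 h).2.1.false
  have h1 : (1 : ℝ) ∉ Z := fun h => (mem_rootsIn.1 h).2.2.false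
  have hcard : (insert 0 (insert 1 Z)).card = Z.card + 2 := by
    rw [card_insert_of_notMem (by simp [h0]), card_insert_of_notMem h1]
  have hcont : ContinuousOn
      (fun y => y ^ c * (1 - y) ^ (b - c - m) * (realHypPoly m (b + 1) (c + 1)).eval y)
      (Icc 0 1) := by
    fun_prop (disch := positivity)
  have hs : ∀ x ∈ insert 0 (insert 1 Z), x ∈ Icc (0 : ℝ) 1 ∧
      x ^ c * (1 - x) ^ (b - c - m) * (realHypPoly m (b + 1) (c + 1)).eval x = 0 := by
    intro x hx
    rcases mem_insert.1 hx with rfl | hx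
    · simp [Real.zero_rpow hc.ne']
    rcases mem_insert.1 hx with rfl | hx
    · simp [Real.zero_rpow hβ.ne']
    obtain ⟨⟨_, hroot⟩, hx01⟩ := mem_rootsIn.1 hx
    exact ⟨Ioo_subset_Icc_self hx01, by simp [hroot.eq_zero]⟩
  have ht : ∀ x ∈ Ioo (0 : ℝ) 1,
      c * x ^ (c - 1) * (1 - x) ^ (b - c - m - 1) * (realHypPoly (m + 1) b c).eval x = 0 →
        x ∈ rootsIn (realHypPoly (m + 1) b c) (Ioo 0 1) := by
    intro x hx hzero
    have hx1 : 0 < 1 - x := sub_pos.2 hx.2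
    refine mem_rootsIn.2 ⟨⟨realHypPoly_ne_zero _ _ _, ?_⟩, hx⟩
    simpa [hc.ne', (Real.rpow_pos_of_pos hx.1 _).ne', (Real.rpow_pos_of_pos hx1 _).ne']
      using hzero
  have := card_le_card_add_one_of_hasDerivAt hcont
    (fun x hx => hasDerivAt_rpow_mul_rpow_mul_realHypPoly hc m b hx.1 hx.2) hs ht
  omega

lemma le_card_rootsIn_Ioo_realHypPoly (m : ℕ) {b c : ℝ} (hc : 0 < c)
    (hbc : (m : ℝ) - 1 < b - c) :
    m ≤ (rootsIn (realHypPoly m b c) (Ioo 0 1)).card := by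
  induction m generalizing b c with
  | zero => exact Nat.zero_le _
  | succ m ih =>
    push_cast at hbc
    have hprev := ih (b := b + 1) (c := c + 1) (by linarith) (by linarith)
    have hstep := card_rootsIn_Ioo_realHypPoly_succ hc (m := m) (b := b) (by linarith)
    omega

lemma hypPoly_eq_map_realHypPoly (n : ℕ) (b c : ℝ) :
    hypPoly n b c = (realHypPoly n b c).map (algebraMap ℝ ℂ) := by
  simp [hypPoly, realHypPoly, hypCoeff, Polynomial.map_sum]

theorem hypPoly_half_zeros_in_unit_interval_general (n : ℕ) (b : ℝ)
    (hb : (n : ℝ) - 1/2 < b) :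
    Multiset.card (hypPoly n b (1/2)).roots = n ∧
    ∀ z ∈ (hypPoly n b (1/2)).roots,
      z.im = 0 ∧ 0 < z.re ∧ z.re < 1 ∧ (hypPoly n b (1/2)).rootMultiplicity z = 1 := by
  obtain ⟨hdeg, hcard, hnodup, hIoo⟩ := card_roots_eq_of_le_card_rootsIn
    (natDegree_realHypPoly_le n b (1/2))
    (le_card_rootsIn_Ioo_realHypPoly n (by norm_num) (by linarith))
  have hroots : (hypPoly n b (1/2)).roots
      = (realHypPoly n b (1/2)).roots.map (algebraMap ℝ ℂ) := by
    rw [hypPoly_eq_map_realHypPoly,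
      roots_map_of_injective_of_card_eq_natDegree (algebraMap ℝ ℂ).injective
        (hcard.trans hdeg.symm)]
  refine ⟨by rw [hroots, Multiset.card_map, hcard], fun z hz => ?_⟩
  obtain ⟨x, hx, rfl⟩ := Multiset.mem_map.1 (hroots ▸ hz)
  have hx01 := hIoo x hx
  refine ⟨by simp, by simpa using hx01.1, by simpa using hx01.2, ?_⟩
  rw [← count_roots, hroots, Multiset.count_map_eq_count' _ _ (algebraMap ℝ ℂ).injective,
    Multiset.count_eq_one_of_mem hnodup hx]

/-- For `b > n - 1/2`, all `n` zeros of `F(-n, b; 1/2; z)` are real, simple and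
lie in `(0, 1)`. -/
theorem hypPoly_half_zeros_in_unit_interval (n : ℕ) (hn : 1 ≤ n) (b : ℝ)
    (hb : (n : ℝ) - 1/2 < b) :
    Multiset.card (hypPoly n b (1/2)).roots = n ∧
    ∀ z ∈ (hypPoly n b (1/2)).roots,
      z.im = 0 ∧ 0 < z.re ∧ z.re < 1 ∧ (hypPoly n b (1/2)).rootMultiplicity z = 1 :=
  hypPoly_half_zeros_in_unit_interval_general n b hb
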